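/- Assume g̃(m) ≠ 0 for every integer m. Then for all ℓ, k ∈ ℕ one has |ℓ,k⟩ = Σ_{n=0}^ℓ ((−η)^n / n!) · ∏_{j=1}^n [e_{ℓ−j+1} f^(2)_{k+j−1} / g̃((k+n)−(ℓ−n)−j)] · ṽ_{ℓ−n, k+n}, where ṽ_{ℓ,k} := Σ_{n=0}^ℓ M̃^{k,ℓ}_n |ℓ−n, k+n⟩. In other words, this formula inverts the change of basis |ℓ,k⟩ ↦ ṽ_{ℓ,k}. -/

import Mathlib

/-- The basis vector `|ℓ,k⟩` of the space of finitely supported functions `ℕ × ℕ → ℂ`. -/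
noncomputable def ket (p : ℕ × ℕ) : (ℕ × ℕ) →₀ ℂ := Finsupp.single p 1

/-- The coefficient `M̃^{k,ℓ}_n = (η^n/n!) ∏_{j=1}^n e_{ℓ−j+1} f^(2)_{k+j−1} / g̃(k−ℓ+j)`,
where `e_m = m`, `f^(2)_m = 2λ₂ − m` and `g̃(x) = δ₂ − δ₁ + η(λ₁ − λ₂ + x)`. -/
noncomputable def Mtcoef (lam1 lam2 del1 del2 eta : ℂ) (k l n : ℕ) : ℂ :=
  (eta ^ n / (n.factorial : ℂ)) *
    ∏ j ∈ Finset.Icc 1 n,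
      ((l : ℂ) - (j : ℂ) + 1) * (2 * lam2 - ((k : ℂ) + (j : ℂ) - 1)) /
        (del2 - del1 + eta * (lam1 - lam2 + ((k : ℂ) - (l : ℂ) + (j : ℂ))))

/-- The vector `ṽ_{ℓ,k} = Σ_{n=0}^ℓ M̃^{k,ℓ}_n |ℓ−n, k+n⟩`. -/
noncomputable def vA (lam1 lam2 del1 del2 eta : ℂ) (l k : ℕ) : (ℕ × ℕ) →₀ ℂ :=
  ∑ n ∈ Finset.range (l + 1), Mtcoef lam1 lam2 del1 del2 eta k l n • ket (l - n, k + n)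

/-!
Expanding every `ṽ_{ℓ−n,k+n}` in the basis, the coefficient of `|ℓ−s,k+s⟩` is the convolution
`Σ_{n=0}^s C_n M̃^{k+n,ℓ−n}_{s−n}` of the claimed coefficients `C_n` with those of `ṽ`, so it
suffices that this is `δ_{s,0}`. Write `g̃(k−ℓ+m) = η (x+m)`. The powers of `η` cancel, the
numerators multiply to `∏_{j=1}^s e_{ℓ−j+1} f^(2)_{k+j−1}` independently of `n`, and the
denominators to `(x+n)(x+n+1)⋯(x+n+s)/(x+2n)`, so for `s ≥ 1` the claim is
`Σ_n c_{s,n} (x+2n) / ((x+n)⋯(x+n+s)) = 0` with `c_{s,n} = (−1)^n / (n! (s−n)!)`.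
By the partial fraction decomposition `1/(y(y+1)⋯(y+s)) = Σ_i c_{s,i}/(y+i)` the left side is
`Σ_{n,i} c_{s,n} c_{s,i} (x+2n)/(x+n+i)`; symmetrising in `n ↔ i` turns `x+2n` into `x+n+i`,
leaving `(Σ_n c_{s,n})² = 0`.
-/

open Finset Nat

section PartialFractions

variable {K : Type*} [Field K] [CharZero K]

def partialFracCoeff (s i : ℕ) : K := (-1) ^ i / (i ! * (s - i)! : K)

theorem partialFracCoeff_eq_choose {s i : ℕ} (h : i ≤ s) :
    (partialFracCoeff s i : K) = (-1) ^ i * s.choose i / s ! := by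
  have : (s ! : K) ≠ 0 := Nat.cast_ne_zero.2 s.factorial_ne_zero
  rw [partialFracCoeff, Nat.cast_choose K h]
  field_simp

theorem sum_partialFracCoeff {s : ℕ} (hs : s ≠ 0) :
    ∑ i ∈ range (s + 1), (partialFracCoeff s i : K) = 0 := by
  have h := congrArg (Int.cast : ℤ → K) (Int.alternating_sum_range_choose_of_ne hs)
  push_cast at h
  rw [sum_congr rfl fun i hi => partialFracCoeff_eq_choose (mem_range_succ_iff.1 hi),
    ← sum_div, h, zero_div]

theorem partialFracCoeff_eq_mul_partialFracCoeff_succ {s i : ℕ} (h : i ≤ s) :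
    (partialFracCoeff s i : K) = (s + 1 - i : ℕ) * partialFracCoeff (s + 1) i := by
  have : ((s - i : ℕ) + 1 : K) ≠ 0 := by exact_mod_cast (s - i).succ_ne_zero
  rw [partialFracCoeff, partialFracCoeff, Nat.sub_add_comm h, factorial_succ]
  push_cast
  field_simp

theorem inv_prod_range_add_eq_sum_partialFracCoeff (x : K) (hx : ∀ m : ℕ, x + m ≠ 0) (s : ℕ) :
    (∏ i ∈ range (s + 1), (x + i))⁻¹ = ∑ i ∈ range (s + 1), partialFracCoeff s i * (x + i)⁻¹ := by
  induction s with
  | zero => simp [partialFracCoeff]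
  | succ s ih =>
    have step : ∀ i ∈ range (s + 1), partialFracCoeff s i * (x + i)⁻¹ * (x + (s + 1 : ℕ))⁻¹
        = partialFracCoeff (s + 1) i * (x + i)⁻¹ -
            partialFracCoeff (s + 1) i * (x + (s + 1 : ℕ))⁻¹ := by
      intro i hi
      have hi : i ≤ s := mem_range_succ_iff.1 hi
      have hgap : ((s + 1 - i : ℕ) : K) = (x + (s + 1 : ℕ)) - (x + i) := by
        push_cast [Nat.cast_sub (hi.trans s.le_succ)]
        ring
      rw [partialFracCoeff_eq_mul_partialFracCoeff_succ hi, hgap]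
      linear_combination (partialFracCoeff (s + 1) i : K) *
        ((x + i)⁻¹ * mul_inv_cancel₀ (hx (s + 1)) - (x + (s + 1 : ℕ))⁻¹ * mul_inv_cancel₀ (hx i))
    have hlast := sum_partialFracCoeff (K := K) (s := s + 1) (by omega)
    rw [sum_range_succ, add_eq_zero_iff_neg_eq] at hlast
    rw [prod_range_succ, mul_inv, ih, sum_mul, sum_congr rfl step, sum_sub_distrib, ← sum_mul,
      sum_range_succ _ (s + 1), ← hlast]
    push_cast
    ring

theorem sum_partialFracCoeff_mul_inv_prod_eq_zero (x : K) (hx : ∀ m : ℕ, x + m ≠ 0) {s : ℕ}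
    (hs : s ≠ 0) :
    ∑ n ∈ range (s + 1), partialFracCoeff s n * (x + (2 * n : ℕ)) *
      (∏ i ∈ range (s + 1), (x + (n + i : ℕ)))⁻¹ = 0 := by
  set T := ∑ n ∈ range (s + 1), ∑ i ∈ range (s + 1),
    partialFracCoeff s n * partialFracCoeff s i * ((x + 2 * n) * (x + (n + i : ℕ))⁻¹)
  have hexpand : ∑ n ∈ range (s + 1), partialFracCoeff s n * (x + (2 * n : ℕ)) *
      (∏ i ∈ range (s + 1), (x + (n + i : ℕ)))⁻¹ = T := by
    refine sum_congr rfl fun n _ => ?_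
    have hxn : ∀ m : ℕ, x + n + m ≠ 0 := fun m => by simpa [add_assoc] using hx (n + m)
    simp only [Nat.cast_add, ← add_assoc]
    rw [inv_prod_range_add_eq_sum_partialFracCoeff _ hxn, mul_sum]
    refine sum_congr rfl fun i _ => ?_
    push_cast
    ring
  have hswap : T = ∑ n ∈ range (s + 1), ∑ i ∈ range (s + 1),
      partialFracCoeff s n * partialFracCoeff s i * ((x + 2 * i) * (x + (n + i : ℕ))⁻¹) := by
    rw [sum_comm]
    refine sum_congr rfl fun n _ => sum_congr rfl fun i _ => ?_
    rw [add_comm i n]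
    ring
  have hdouble : T + T = 2 * ((∑ n ∈ range (s + 1), partialFracCoeff s n) *
      ∑ i ∈ range (s + 1), (partialFracCoeff s i : K)) := by
    nth_rw 2 [hswap]
    rw [← sum_add_distrib, sum_mul_sum, mul_sum]
    refine sum_congr rfl fun n _ => ?_
    rw [← sum_add_distrib, mul_sum]
    refine sum_congr rfl fun i _ => ?_
    have := hx (n + i)
    push_cast at this ⊢
    field_simp
    ring
  rw [hexpand, ← add_self_eq_zero, hdouble, sum_partialFracCoeff hs, zero_mul, mul_zero]

end PartialFractions

section Products

variable {M : Type*} [CommMonoid M]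

theorem prod_Icc_one_mul_prod_Icc_one_add (f : ℕ → M) {n s : ℕ} (h : n ≤ s) :
    (∏ j ∈ Icc 1 n, f j) * ∏ j ∈ Icc 1 (s - n), f (n + j) = ∏ j ∈ Icc 1 s, f j := by
  simp only [← Ico_add_one_right_eq_Icc]
  rw [prod_Ico_add, show s - n + 1 + n = s + 1 by omega, add_comm 1 n,
    prod_Ico_consecutive _ (by omega) (by omega)]

theorem prod_Icc_sub_mul_prod_Icc_add (f : ℕ → M) {n s : ℕ} (h : n ≤ s) :
    (∏ j ∈ Icc 1 n, f (2 * n - j)) * (f (2 * n) * ∏ j ∈ Icc 1 (s - n), f (2 * n + j)) =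
      ∏ i ∈ range (s + 1), f (n + i) := by
  simp only [← Ico_add_one_right_eq_Icc]
  rw [prod_Ico_reflect _ _ (by omega), prod_Ico_add, add_comm 1 (2 * n),
    ← prod_eq_prod_Ico_succ_bot (by omega), show 2 * n + 1 - (n + 1) = n by omega,
    show 2 * n + 1 - 1 = 2 * n by omega, show s - n + 1 + 2 * n = n + s + 1 by omega,
    prod_Ico_consecutive _ (by omega) (by omega),
    prod_Ico_eq_prod_range, show n + s + 1 - n = s + 1 by omega]

theorem prod_Icc_div_mul {G : Type*} [DivisionCommMonoid G] (c : G) (f g : ℕ → G) (n : ℕ) :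
    ∏ j ∈ Icc 1 n, f j / (c * g j) = (∏ j ∈ Icc 1 n, f j) / (c ^ n * ∏ j ∈ Icc 1 n, g j) := by
  rw [prod_div_distrib, prod_mul_distrib, prod_const, Nat.card_Icc, Nat.add_sub_cancel]

end Products

section Convolution

variable {K : Type*} [Field K] [CharZero K]

theorem sum_coeff_convolution_eq_zero {η x : K} (hη : η ≠ 0) (hx : ∀ m : ℕ, x + m ≠ 0)
    (a : ℕ → K) {s : ℕ} (hs : s ≠ 0) :
    ∑ n ∈ range (s + 1),
      ((-η) ^ n / n ! * ∏ j ∈ Icc 1 n, a j / (η * (x + (2 * n - j : ℕ)))) *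
        (η ^ (s - n) / (s - n)! * ∏ j ∈ Icc 1 (s - n), a (n + j) / (η * (x + (2 * n + j : ℕ))))
      = 0 := by
  have hterm : ∀ n ∈ range (s + 1),
      ((-η) ^ n / n ! * ∏ j ∈ Icc 1 n, a j / (η * (x + (2 * n - j : ℕ)))) *
        (η ^ (s - n) / (s - n)! * ∏ j ∈ Icc 1 (s - n), a (n + j) / (η * (x + (2 * n + j : ℕ))))
      = (∏ j ∈ Icc 1 s, a j) * (partialFracCoeff s n * (x + (2 * n : ℕ)) *
          (∏ i ∈ range (s + 1), (x + (n + i : ℕ)))⁻¹) := by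
    intro n hn
    have hns : n ≤ s := mem_range_succ_iff.1 hn
    have hden := prod_Icc_sub_mul_prod_Icc_add (fun m : ℕ => x + m) hns
    have hprod : ∀ t : Finset ℕ, ∀ g : ℕ → ℕ, ∏ j ∈ t, (x + (g j : ℕ)) ≠ 0 :=
      fun t g => prod_ne_zero_iff.2 fun j _ => hx (g j)
    have hfac : ∀ t : ℕ, (t ! : K) ≠ 0 := fun t => Nat.cast_ne_zero.2 t.factorial_ne_zero
    rw [prod_Icc_div_mul, prod_Icc_div_mul, ← prod_Icc_one_mul_prod_Icc_one_add a hns, ← hden,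
      partialFracCoeff, neg_pow]
    field_simp [hprod, hfac]
    rw [mul_div_mul_right _ _ (hx (2 * n))]
  rw [sum_congr rfl hterm, ← mul_sum, sum_partialFracCoeff_mul_inv_prod_eq_zero x hx hs,
    mul_zero]

end Convolution

noncomputable def invMtcoef (lam1 lam2 del1 del2 eta : ℂ) (k l n : ℕ) : ℂ :=
  ((-eta) ^ n / (n.factorial : ℂ)) *
    ∏ j ∈ Finset.Icc 1 n,
      ((l : ℂ) - (j : ℂ) + 1) * (2 * lam2 - ((k : ℂ) + (j : ℂ) - 1)) /
        (del2 - del1 + eta * (lam1 - lam2 +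
          (((k : ℂ) + (n : ℂ)) - ((l : ℂ) - (n : ℂ)) - (j : ℂ))))

section ChangeOfBasis

variable (lam1 lam2 del1 del2 eta : ℂ)

theorem sum_smul_vA (C : ℕ → ℂ) (l k : ℕ) :
    ∑ n ∈ range (l + 1), C n • vA lam1 lam2 del1 del2 eta (l - n) (k + n) =
      ∑ s ∈ range (l + 1), (∑ n ∈ range (s + 1),
        C n * Mtcoef lam1 lam2 del1 del2 eta (k + n) (l - n) (s - n)) • ket (l - s, k + s) := by
  have hflip := sum_range_diag_flip (l + 1) fun n m =>
    (C n * Mtcoef lam1 lam2 del1 del2 eta (k + n) (l - n) m) • ket (l - (n + m), k + (n + m))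
  simp only [vA, smul_sum, smul_smul, sum_smul]
  refine (sum_congr rfl fun n hn => ?_).trans
    (hflip.symm.trans (sum_congr rfl fun s _ => sum_congr rfl fun n hn => ?_))
  · rw [show l + 1 - n = l - n + 1 by grind]
    simp only [Nat.sub_sub, add_assoc]
  · rw [Nat.add_sub_cancel' (mem_range_succ_iff.1 hn)]

variable {lam1 lam2 del1 del2 eta}

theorem sum_invMtcoef_mul_Mtcoef (heta : eta ≠ 0)
    (hg : ∀ m : ℤ, del2 - del1 + eta * (lam1 - lam2 + (m : ℂ)) ≠ 0) {l k s : ℕ} (hsl : s ≤ l)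
    (hs : s ≠ 0) :
    ∑ n ∈ range (s + 1), invMtcoef lam1 lam2 del1 del2 eta k l n *
      Mtcoef lam1 lam2 del1 del2 eta (k + n) (l - n) (s - n) = 0 := by
  set x : ℂ := (del2 - del1) / eta + lam1 - lam2 + k - l
  have hg_eq : ∀ y : ℂ, del2 - del1 + eta * (lam1 - lam2 + y) = eta * (x + (y - k + l)) := by
    intro y
    simp only [x]
    field_simp
    ring
  have hx : ∀ m : ℕ, x + m ≠ 0 := by
    intro m hm
    apply hg (k - l + m)
    rw [hg_eq]
    push_cast
    linear_combination eta * hm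
  rw [← sum_coeff_convolution_eq_zero heta hx
    (fun j => ((l : ℂ) - j + 1) * (2 * lam2 - (k + j - 1))) hs]
  refine sum_congr rfl fun n hn => ?_
  have hnl : n ≤ l := (mem_range_succ_iff.1 hn).trans hsl
  congr 1
  · refine congrArg _ (prod_congr rfl fun j hj => ?_)
    rw [hg_eq]
    push_cast [Nat.cast_sub (show j ≤ 2 * n by have := (mem_Icc.1 hj).2; omega)]
    ring
  · refine congrArg _ (prod_congr rfl fun j _ => ?_)
    rw [hg_eq]
    push_cast [Nat.cast_sub hnl]
    ring

end ChangeOfBasis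

/-- inverse change of basis:
`|ℓ,k⟩ = Σ_{n=0}^ℓ ((−η)^n/n!) ∏_{j=1}^n [e_{ℓ−j+1} f^(2)_{k+j−1} / g̃((k+n)−(ℓ−n)−j)] ṽ_{ℓ−n,k+n}`. -/
theorem ket_eq_sum_vA (lam1 lam2 del1 del2 eta : ℂ) (heta : eta ≠ 0)
    (hg : ∀ m : ℤ, del2 - del1 + eta * (lam1 - lam2 + (m : ℂ)) ≠ 0) (l k : ℕ) :
    ket (l, k) =
      ∑ n ∈ Finset.range (l + 1),
        (((-eta) ^ n / (n.factorial : ℂ)) *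
            ∏ j ∈ Finset.Icc 1 n,
              ((l : ℂ) - (j : ℂ) + 1) * (2 * lam2 - ((k : ℂ) + (j : ℂ) - 1)) /
                (del2 - del1 + eta * (lam1 - lam2 +
                  (((k : ℂ) + (n : ℂ)) - ((l : ℂ) - (n : ℂ)) - (j : ℂ))))) •
          vA lam1 lam2 del1 del2 eta (l - n) (k + n) := by
  change _ = ∑ n ∈ range (l + 1), invMtcoef lam1 lam2 del1 del2 eta k l n •
    vA lam1 lam2 del1 del2 eta (l - n) (k + n)
  rw [sum_smul_vA, sum_eq_single_of_mem 0 (by simp) fun s hs hs0 => by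
    rw [sum_invMtcoef_mul_Mtcoef heta hg (mem_range_succ_iff.1 hs) hs0, zero_smul]]
  simp [invMtcoef, Mtcoef]
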